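/- Let {Z^(k)} be the exact PBCD sequence with Z^(0) ∈ S^{N−1}. Then every limit point Z* of {Z^(k)} lies in S^{N−1} and is a KKT point of the penalized problem (P_β), i.e. for every i ∈ {2,…,N}, ⟨∇_{X_i} f_β(Z*), X − X*_i⟩ ≥ 0 for all X ∈ S. -/

import Mathlib

open Matrix Finset Filter Topology

noncomputable section

/-- Trace inner product `⟨A,B⟩ = Tr(AᵀB)` on `K×K` real matrices. -/
def mip {K : ℕ} (A B : Matrix (Fin K) (Fin K) ℝ) : ℝ := (Aᵀ * B).trace

/-- The section `S = {W : We = 𝟙, WᵀΞϱ = ϱ, Tr W = 0, W ≥ 0}` of the feasible region. -/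
def Sset {K : ℕ} (e ϱ : Fin K → ℝ) : Set (Matrix (Fin K) (Fin K) ℝ) :=
  {W | W.mulVec e = (fun _ => 1) ∧ Wᵀ.mulVec (fun j => e j * ϱ j) = ϱ ∧
    W.trace = 0 ∧ ∀ a b, 0 ≤ W a b}

/-- The discretized repulsive energy
`f(Z) = Σ_i ⟨X_i, ΛΞCΞ⟩ + Σ_{i<j} ⟨X_i, ΞΛX_jΞCΞ⟩` (blocks indexed by `Fin m`, `m = N−1`). -/
def fE {K m : ℕ} (e ϱ : Fin K → ℝ) (C : Matrix (Fin K) (Fin K) ℝ)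
    (Z : Fin m → Matrix (Fin K) (Fin K) ℝ) : ℝ :=
  (∑ i, mip (Z i) (diagonal ϱ * diagonal e * C * diagonal e)) +
    ∑ i, ∑ j ∈ Finset.Ioi i,
      mip (Z i) (diagonal e * diagonal ϱ * Z j * diagonal e * C * diagonal e)

/-- The `ℓ₁`-penalized energy `f_β(Z) = f(Z) + β Σ_{i<j} ⟨X_i, X_j⟩`. -/
def fB {K m : ℕ} (e ϱ : Fin K → ℝ) (C : Matrix (Fin K) (Fin K) ℝ) (β : ℝ)
    (Z : Fin m → Matrix (Fin K) (Fin K) ℝ) : ℝ :=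
  fE e ϱ C Z + β * ∑ i, ∑ j ∈ Finset.Ioi i, mip (Z i) (Z j)

/-- The block gradient
`∇_{X_i} f_β(Z) = ΛΞCΞ + Σ_{j<i} ΛΞX_jΞCΞ + Σ_{j>i} ΞΛX_jΞCΞ + β Σ_{j≠i} X_j`. -/
def gradB {K m : ℕ} (e ϱ : Fin K → ℝ) (C : Matrix (Fin K) (Fin K) ℝ) (β : ℝ)
    (Z : Fin m → Matrix (Fin K) (Fin K) ℝ) (i : Fin m) : Matrix (Fin K) (Fin K) ℝ :=
  diagonal ϱ * diagonal e * C * diagonal e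
    + ∑ j ∈ Finset.Iio i, diagonal ϱ * diagonal e * Z j * diagonal e * C * diagonal e
    + ∑ j ∈ Finset.Ioi i, diagonal e * diagonal ϱ * Z j * diagonal e * C * diagonal e
    + β • ∑ j ∈ Finset.univ.erase i, Z j

/-- `Z* ∈ S^{N−1}` is a KKT point of the penalized problem `(P_β)` if
`⟨∇_{X_i} f_β(Z*), X − X*_i⟩ ≥ 0` for all `X ∈ S` and all blocks `i`. -/
def IsKKT {K m : ℕ} (e ϱ : Fin K → ℝ) (C : Matrix (Fin K) (Fin K) ℝ) (β : ℝ)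
    (Z : Fin m → Matrix (Fin K) (Fin K) ℝ) : Prop :=
  (∀ i, Z i ∈ Sset e ϱ) ∧
    ∀ i, ∀ X ∈ Sset e ϱ, 0 ≤ mip (gradB e ϱ C β Z i) (X - Z i)

/-- The `i`-th block objective of PBCD at outer iterate `Zold` (with the already-updated
blocks taken from `Znew`):
`X ↦ f_β(Znew_{<i}, X, Zold_{>i}) + (σ/2)‖X − Zold_i‖_F²`. -/
def blockObj {K m : ℕ} (e ϱ : Fin K → ℝ) (C : Matrix (Fin K) (Fin K) ℝ) (β σ : ℝ)
    (Zold Znew : Fin m → Matrix (Fin K) (Fin K) ℝ) (i : Fin m)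
    (X : Matrix (Fin K) (Fin K) ℝ) : ℝ :=
  fB e ϱ C β (fun j => if j < i then Znew j else if j = i then X else Zold j)
    + σ / 2 * mip (X - Zold i) (X - Zold i)

/-- `Zseq` is an exact PBCD sequence: for every `k` and every block `i` (in order),
`X_i^{(k+1)}` is the (unique) global solution of the `i`-th block problem. -/
def IsPBCD {K m : ℕ} (e ϱ : Fin K → ℝ) (C : Matrix (Fin K) (Fin K) ℝ) (β σ : ℝ)
    (Zseq : ℕ → Fin m → Matrix (Fin K) (Fin K) ℝ) : Prop :=
  ∀ k i, Zseq (k + 1) i ∈ Sset e ϱ ∧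
    ∀ X ∈ Sset e ϱ,
      blockObj e ϱ C β σ (Zseq k) (Zseq (k + 1)) i (Zseq (k + 1) i) ≤
        blockObj e ϱ C β σ (Zseq k) (Zseq (k + 1)) i X

/-- `Zbar` is the block-optimal sequence of `Zseq`: `X̄_i^{(k+1)}` is the (unique) global
solution of the `i`-th block problem built from the iterates of `Zseq` themselves. -/
def IsBlockOpt {K m : ℕ} (e ϱ : Fin K → ℝ) (C : Matrix (Fin K) (Fin K) ℝ) (β σ : ℝ)
    (Zseq Zbar : ℕ → Fin m → Matrix (Fin K) (Fin K) ℝ) : Prop :=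
  ∀ k i, Zbar (k + 1) i ∈ Sset e ϱ ∧
    ∀ X ∈ Sset e ϱ,
      blockObj e ϱ C β σ (Zseq k) (Zseq (k + 1)) i (Zbar (k + 1) i) ≤
        blockObj e ϱ C β σ (Zseq k) (Zseq (k + 1)) i X

/-- Frobenius norm of a block tuple `Z ∈ (ℝ^{K×K})^m`. -/
def nZ {K m : ℕ} (Z : Fin m → Matrix (Fin K) (Fin K) ℝ) : ℝ :=
  Real.sqrt (∑ i, mip (Z i) (Z i))


lemma mip_eq_sum {K : ℕ} (A B : Matrix (Fin K) (Fin K) ℝ) :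
    mip A B = ∑ a, ∑ b, A a b * B a b := by
  simp only [mip, Matrix.trace, Matrix.diag, Matrix.mul_apply, Matrix.transpose_apply]
  rw [Finset.sum_comm]

lemma mip_comm {K : ℕ} (A B : Matrix (Fin K) (Fin K) ℝ) : mip A B = mip B A := by
  simp only [mip_eq_sum]; congr 1; ext a; congr 1; ext b; ring

lemma mip_adj {K : ℕ} (A B M N : Matrix (Fin K) (Fin K) ℝ) :
    mip A (M * B * N) = mip (Mᵀ * A * Nᵀ) B := by
  simp only [mip, Matrix.transpose_mul, Matrix.transpose_transpose]
  rw [show Aᵀ * (M * B * N) = (Aᵀ * M * B) * N by noncomm_ring,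
    Matrix.trace_mul_comm, ← mul_assoc, ← mul_assoc]

lemma mip_add_left {K : ℕ} (A B X : Matrix (Fin K) (Fin K) ℝ) :
    mip (A + B) X = mip A X + mip B X := by
  simp [mip_eq_sum, add_mul, Finset.sum_add_distrib]

lemma mip_add_right {K : ℕ} (X A B : Matrix (Fin K) (Fin K) ℝ) :
    mip X (A + B) = mip X A + mip X B := by
  simp [mip_eq_sum, mul_add, Finset.sum_add_distrib]

lemma mip_sub_right {K : ℕ} (X A B : Matrix (Fin K) (Fin K) ℝ) :
    mip X (A - B) = mip X A - mip X B := by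
  simp [mip_eq_sum, mul_sub, Finset.sum_sub_distrib]

lemma mip_sub_left {K : ℕ} (A B X : Matrix (Fin K) (Fin K) ℝ) :
    mip (A - B) X = mip A X - mip B X := by
  simp [mip_eq_sum, sub_mul, Finset.sum_sub_distrib]

lemma mip_smul_left {K : ℕ} (r : ℝ) (A X : Matrix (Fin K) (Fin K) ℝ) :
    mip (r • A) X = r * mip A X := by
  simp [mip_eq_sum, Finset.mul_sum, Matrix.smul_apply, smul_eq_mul]; congr 1; ext a
  congr 1; ext b; ring

lemma mip_sum_left {K m : ℕ} (s : Finset (Fin m)) (f : Fin m → Matrix (Fin K) (Fin K) ℝ)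
    (X : Matrix (Fin K) (Fin K) ℝ) : mip (∑ j ∈ s, f j) X = ∑ j ∈ s, mip (f j) X := by
  classical
  induction s using Finset.induction with
  | empty => simp [mip_eq_sum]
  | insert _ _ h ih => rw [Finset.sum_insert h, mip_add_left, ih, Finset.sum_insert h]

lemma mip_self_nonneg {K : ℕ} (A : Matrix (Fin K) (Fin K) ℝ) : 0 ≤ mip A A := by
  rw [mip_eq_sum]
  exact Finset.sum_nonneg fun a _ => Finset.sum_nonneg fun b _ => mul_self_nonneg _

lemma sq_le_mip_self {K : ℕ} (A : Matrix (Fin K) (Fin K) ℝ) (a b : Fin K) :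
    A a b * A a b ≤ mip A A := by
  rw [mip_eq_sum]
  calc A a b * A a b ≤ ∑ b', A a b' * A a b' :=
        Finset.single_le_sum (f := fun b' => A a b' * A a b')
          (fun b' _ => mul_self_nonneg _) (Finset.mem_univ b)
    _ ≤ _ := Finset.single_le_sum (f := fun a' => ∑ b', A a' b' * A a' b')
        (fun a' _ => Finset.sum_nonneg fun b' _ => mul_self_nonneg _) (Finset.mem_univ a)

lemma continuous_mip {K : ℕ} :
    Continuous fun p : Matrix (Fin K) (Fin K) ℝ × Matrix (Fin K) (Fin K) ℝ => mip p.1 p.2 := by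
  simp only [mip_eq_sum]
  exact continuous_finset_sum _ fun a _ => continuous_finset_sum _ fun b _ =>
    (continuous_fst.matrix_elem a b).mul
      (continuous_snd.matrix_elem a b)
lemma ex_unused1 (m : ℕ) (i : Fin m) (g : Fin m → ℝ) :
    ∑ j, ∑ j' ∈ Finset.Ioi j, (if j' = i then g j else 0) = ∑ j ∈ Finset.Iio i, g j := by
  have h : ∀ j : Fin m, ∑ j' ∈ Finset.Ioi j, (if j' = i then g j else 0)
      = if j ∈ Finset.Iio i then g j else 0 := by
    intro j
    rw [Finset.sum_ite_eq' (Finset.Ioi j) i (fun _ => g j)]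
    simp [Finset.mem_Ioi, Finset.mem_Iio]
  simp only [h, Finset.sum_ite_mem, Finset.univ_inter]

lemma ex_unused2 (m : ℕ) (i : Fin m) (h : Fin m → ℝ) :
    ∑ j, ∑ j' ∈ Finset.Ioi j, (if j = i then h j' else 0) = ∑ j' ∈ Finset.Ioi i, h j' := by
  rw [Finset.sum_eq_single_of_mem i (Finset.mem_univ i)]
  · simp
  · intro j _ hj; simp [hj]

lemma sum_erase_split {K : ℕ} (m : ℕ) (i : Fin m) (f : Fin m → Matrix (Fin K) (Fin K) ℝ) :
    ∑ j ∈ Finset.univ.erase i, f j = ∑ j ∈ Finset.Iio i, f j + ∑ j ∈ Finset.Ioi i, f j := by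
  rw [← Finset.sum_union]
  · congr 1
    ext j
    simp only [Finset.mem_erase, Finset.mem_union, Finset.mem_Iio, Finset.mem_Ioi,
      Finset.mem_univ, and_true]
    constructor
    · intro hne; exact lt_or_gt_of_ne hne
    · intro hlt; rcases hlt with h | h
      · exact ne_of_lt h
      · exact ne_of_gt h
  · rw [Finset.disjoint_left]
    intro a ha hb
    simp only [Finset.mem_Iio] at ha
    simp only [Finset.mem_Ioi] at hb
    exact absurd (ha.trans hb) (lt_irrefl a)

section main
variable {K m : ℕ} (e ϱ : Fin K → ℝ) (C : Matrix (Fin K) (Fin K) ℝ) (β : ℝ)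

/-- mixed gradient at the partially-updated point -/
def Gmix (Zold Znew : Fin m → Matrix (Fin K) (Fin K) ℝ) (i : Fin m) :
    Matrix (Fin K) (Fin K) ℝ :=
  diagonal ϱ * diagonal e * C * diagonal e
    + ∑ j ∈ Finset.Iio i, diagonal ϱ * diagonal e * Znew j * diagonal e * C * diagonal e
    + ∑ j ∈ Finset.Ioi i, diagonal e * diagonal ϱ * Zold j * diagonal e * C * diagonal e
    + β • (∑ j ∈ Finset.Iio i, Znew j + ∑ j ∈ Finset.Ioi i, Zold j)

lemma mip_pair_swap (hCsym : Cᵀ = C) (A B : Matrix (Fin K) (Fin K) ℝ) :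
    mip A (diagonal e * diagonal ϱ * B * diagonal e * C * diagonal e)
      = mip (diagonal ϱ * diagonal e * A * diagonal e * C * diagonal e) B := by
  rw [show diagonal e * diagonal ϱ * B * diagonal e * C * diagonal e
      = (diagonal e * diagonal ϱ) * B * (diagonal e * C * diagonal e) by noncomm_ring,
    mip_adj]
  congr 1
  simp only [Matrix.transpose_mul, Matrix.diagonal_transpose, hCsym]
  noncomm_ring

lemma sum_Ioi_ite_snd (i : Fin m) (g : Fin m → ℝ) :
    ∑ j, ∑ j' ∈ Finset.Ioi j, (if j' = i then g j else 0) = ∑ j ∈ Finset.Iio i, g j := by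
  have h : ∀ j : Fin m, ∑ j' ∈ Finset.Ioi j, (if j' = i then g j else 0)
      = if j ∈ Finset.Iio i then g j else 0 := by
    intro j
    rw [Finset.sum_ite_eq' (Finset.Ioi j) i (fun _ => g j)]
    simp [Finset.mem_Ioi, Finset.mem_Iio]
  simp only [h, Finset.sum_ite_mem, Finset.univ_inter]

lemma sum_Ioi_ite_fst (i : Fin m) (h : Fin m → ℝ) :
    ∑ j, ∑ j' ∈ Finset.Ioi j, (if j = i then h j' else 0) = ∑ j' ∈ Finset.Ioi i, h j' := by
  rw [Finset.sum_eq_single_of_mem i (Finset.mem_univ i)]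
  · simp
  · intro j _ hj; simp [hj]

lemma pair_sum_update (u : Matrix (Fin K) (Fin K) ℝ → Matrix (Fin K) (Fin K) ℝ → ℝ)
    (hu1 : ∀ a x y, u a (x - y) = u a x - u a y)
    (hu2 : ∀ x y b, u (x - y) b = u x b - u y b)
    (Zold Znew : Fin m → Matrix (Fin K) (Fin K) ℝ) (i : Fin m)
    (X Y : Matrix (Fin K) (Fin K) ℝ) :
    (∑ j, ∑ j' ∈ Finset.Ioi j,
        u ((fun j => if j < i then Znew j else if j = i then X else Zold j) j)
          ((fun j => if j < i then Znew j else if j = i then X else Zold j) j'))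
      - (∑ j, ∑ j' ∈ Finset.Ioi j,
        u ((fun j => if j < i then Znew j else if j = i then Y else Zold j) j)
          ((fun j => if j < i then Znew j else if j = i then Y else Zold j) j'))
      = (∑ j ∈ Finset.Iio i, u (Znew j) (X - Y))
        + (∑ j' ∈ Finset.Ioi i, u (X - Y) (Zold j')) := by
  rw [← sum_Ioi_ite_snd i (fun j => u (Znew j) (X - Y)),
    ← sum_Ioi_ite_fst i (fun j' => u (X - Y) (Zold j')),
    ← Finset.sum_add_distrib, ← Finset.sum_sub_distrib]
  apply Finset.sum_congr rfl
  intro j _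
  rw [← Finset.sum_add_distrib, ← Finset.sum_sub_distrib]
  apply Finset.sum_congr rfl
  intro j' hj'
  have hjj' : j < j' := Finset.mem_Ioi.mp hj'
  by_cases h1 : j' = i
  · subst h1
    have hne : j ≠ j' := ne_of_lt hjj'
    simp [hjj', hne, hu1]
  · by_cases h2 : j = i
    · subst h2
      simp [not_lt_of_gt hjj', h1, hu2]
    · simp [h1, h2]

lemma fB_update_diff (hCsym : Cᵀ = C) (Zold Znew : Fin m → Matrix (Fin K) (Fin K) ℝ)
    (i : Fin m) (X Y : Matrix (Fin K) (Fin K) ℝ) :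
    fB e ϱ C β (fun j => if j < i then Znew j else if j = i then X else Zold j)
      - fB e ϱ C β (fun j => if j < i then Znew j else if j = i then Y else Zold j)
      = mip (Gmix e ϱ C β Zold Znew i) (X - Y) := by
  have hE : ∀ B B' : Matrix (Fin K) (Fin K) ℝ,
      diagonal e * diagonal ϱ * (B - B') * diagonal e * C * diagonal e
        = diagonal e * diagonal ϱ * B * diagonal e * C * diagonal e
          - diagonal e * diagonal ϱ * B' * diagonal e * C * diagonal e := by
    intros; noncomm_ring
  have e2 := pair_sum_update
      (fun a b => mip a (diagonal e * diagonal ϱ * b * diagonal e * C * diagonal e))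
      (fun a x y => by beta_reduce; rw [hE]; exact mip_sub_right _ _ _)
      (fun x y b => mip_sub_left _ _ _) Zold Znew i X Y
  have e3 := pair_sum_update (fun a b => mip a b) (fun a x y => mip_sub_right a x y)
      (fun x y b => mip_sub_left x y b) Zold Znew i X Y
  simp only at e2 e3
  have e2' := e2.trans (by
    rw [Finset.sum_congr rfl (fun j _ => mip_pair_swap e ϱ C hCsym (Znew j) (X - Y)),
      Finset.sum_congr rfl (fun j _ => mip_comm (X - Y)
        (diagonal e * diagonal ϱ * Zold j * diagonal e * C * diagonal e))])
  have e3' := e3.trans (by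
    rw [Finset.sum_congr rfl (fun j _ => mip_comm (X - Y) (Zold j))])
  have e1 : (∑ j, mip ((fun j => if j < i then Znew j else if j = i then X else Zold j) j)
        (diagonal ϱ * diagonal e * C * diagonal e))
      - (∑ j, mip ((fun j => if j < i then Znew j else if j = i then Y else Zold j) j)
        (diagonal ϱ * diagonal e * C * diagonal e))
      = mip (diagonal ϱ * diagonal e * C * diagonal e) (X - Y) := by
    rw [← Finset.sum_sub_distrib, Finset.sum_eq_single_of_mem i (Finset.mem_univ i)
      (fun j _ hj => by by_cases hlt : j < i <;> simp [hlt, hj])]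
    simp only [lt_irrefl, if_false, ite_true, if_true, ite_false]
    rw [← mip_sub_left, mip_comm]
  simp only at e1
  unfold fB fE Gmix
  simp only
  rw [mip_add_left, mip_add_left, mip_add_left, mip_sum_left, mip_sum_left, mip_smul_left,
    mip_add_left, mip_sum_left, mip_sum_left]
  linear_combination e1 + e2' + β * e3'

lemma mip_smul_right (r : ℝ) (A X : Matrix (Fin K) (Fin K) ℝ) :
    mip X (r • A) = r * mip X A := by
  rw [mip_comm, mip_smul_left, mip_comm]

lemma blockObj_diff (σ : ℝ) (hCsym : Cᵀ = C) (Zold Znew : Fin m → Matrix (Fin K) (Fin K) ℝ)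
    (i : Fin m) (X Y : Matrix (Fin K) (Fin K) ℝ) :
    blockObj e ϱ C β σ Zold Znew i X - blockObj e ϱ C β σ Zold Znew i Y
      = mip (Gmix e ϱ C β Zold Znew i + σ • (Y - Zold i)) (X - Y)
        + σ/2 * mip (X - Y) (X - Y) := by
  unfold blockObj
  have hq : σ/2 * mip (X - Zold i) (X - Zold i) - σ/2 * mip (Y - Zold i) (Y - Zold i)
      = mip (σ • (Y - Zold i)) (X - Y) + σ/2 * mip (X - Y) (X - Y) := by
    have h1 : X - Zold i = (Y - Zold i) + (X - Y) := by abel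
    rw [h1, mip_add_left, mip_add_right, mip_add_right, mip_smul_left,
      mip_comm (X - Y) (Y - Zold i)]
    ring
  rw [mip_add_left]
  have := fB_update_diff e ϱ C β hCsym Zold Znew i X Y
  linarith [this, hq]

lemma Sset_segment {X W : Matrix (Fin K) (Fin K) ℝ} (hX : X ∈ Sset e ϱ) (hW : W ∈ Sset e ϱ)
    {t : ℝ} (ht0 : 0 ≤ t) (ht1 : t ≤ 1) : W + t • (X - W) ∈ Sset e ϱ := by
  obtain ⟨h1, h2, h3, h4⟩ := hX
  obtain ⟨g1, g2, g3, g4⟩ := hW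
  refine ⟨?_, ?_, ?_, ?_⟩
  · rw [Matrix.add_mulVec, Matrix.smul_mulVec, Matrix.sub_mulVec, h1, g1]
    funext a
    simp
  · rw [Matrix.transpose_add, Matrix.transpose_smul, Matrix.transpose_sub,
      Matrix.add_mulVec, Matrix.smul_mulVec, Matrix.sub_mulVec, h2, g2]
    funext a
    simp
  · rw [Matrix.trace_add, Matrix.trace_smul, Matrix.trace_sub, h3, g3]
    simp
  · intro a b
    have := h4 a b
    have := g4 a b
    simp only [Matrix.add_apply, Matrix.smul_apply, Matrix.sub_apply, smul_eq_mul]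
    nlinarith

lemma vi_of_min {σ : ℝ} (hσ : 0 < σ) (hCsym : Cᵀ = C)
    (Zold Znew : Fin m → Matrix (Fin K) (Fin K) ℝ) (i : Fin m)
    {Xstar : Matrix (Fin K) (Fin K) ℝ} (hXstar : Xstar ∈ Sset e ϱ)
    (hmin : ∀ X ∈ Sset e ϱ, blockObj e ϱ C β σ Zold Znew i Xstar
      ≤ blockObj e ϱ C β σ Zold Znew i X)
    {X : Matrix (Fin K) (Fin K) ℝ} (hX : X ∈ Sset e ϱ) :
    0 ≤ mip (Gmix e ϱ C β Zold Znew i + σ • (Xstar - Zold i)) (X - Xstar) := by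
  set g := Gmix e ϱ C β Zold Znew i + σ • (Xstar - Zold i) with hg
  set D := X - Xstar with hD
  set v := mip g D with hv
  set c := σ/2 * mip D D with hc
  have hc0 : 0 ≤ c := mul_nonneg (by positivity) (mip_self_nonneg D)
  by_contra hneg
  push_neg at hneg
  have key : ∀ t : ℝ, 0 < t → t ≤ 1 → 0 ≤ t * v + t^2 * c := by
    intro t ht0 ht1
    have hmem : Xstar + t • (X - Xstar) ∈ Sset e ϱ := Sset_segment e ϱ hX hXstar ht0.le ht1
    have hle := hmin _ hmem
    have hd := blockObj_diff e ϱ C β σ hCsym Zold Znew i (Xstar + t • D) Xstar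
    have hsub : Xstar + t • D - Xstar = t • D := by abel
    rw [hsub, mip_smul_right, mip_smul_left, mip_smul_right] at hd
    have : 0 ≤ blockObj e ϱ C β σ Zold Znew i (Xstar + t • D)
        - blockObj e ϱ C β σ Zold Znew i Xstar := by
      rw [hD] at *
      linarith [hle]
    rw [hd] at this
    rw [hv, hc]
    ring_nf
    ring_nf at this
    linarith [this]
  set t := min 1 (-v / (2*c+1)) with ht
  have h2c : (0:ℝ) < 2*c+1 := by linarith
  have ht0 : 0 < t := lt_min one_pos (div_pos (neg_pos.mpr hneg) h2c)
  have ht1 : t ≤ 1 := min_le_left _ _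
  have ht2 : t ≤ -v / (2*c+1) := min_le_right _ _
  have h1 := key t ht0 ht1
  have h2 : 0 ≤ v + t * c := by nlinarith
  have h3 : t * c ≤ (-v / (2*c+1)) * c := mul_le_mul_of_nonneg_right ht2 hc0
  have h4 : (-v / (2*c+1)) * c ≤ -v / 2 := by
    rw [div_mul_eq_mul_div, div_le_div_iff₀ h2c two_pos]
    nlinarith [neg_pos.mpr hneg]
  linarith

lemma mip_zero : mip (0 : Matrix (Fin K) (Fin K) ℝ) 0 = 0 := by simp [mip_eq_sum]

lemma suff_decrease {σ : ℝ} (Zold Znew : Fin m → Matrix (Fin K) (Fin K) ℝ)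
    (hold : ∀ i, Zold i ∈ Sset e ϱ)
    (hmin : ∀ i, ∀ X ∈ Sset e ϱ, blockObj e ϱ C β σ Zold Znew i (Znew i)
      ≤ blockObj e ϱ C β σ Zold Znew i X) :
    fB e ϱ C β Znew
      + σ/2 * ∑ j, mip (Znew j - Zold j) (Znew j - Zold j) ≤ fB e ϱ C β Zold := by
  set R : ℕ → (Fin m → Matrix (Fin K) (Fin K) ℝ) :=
    fun n j => if (j : ℕ) < n then Znew j else Zold j with hR
  have claim : ∀ n, n ≤ m → fB e ϱ C β (R n)
      + σ/2 * ∑ j ∈ Finset.univ.filter (fun j : Fin m => (j : ℕ) < n),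
          mip (Znew j - Zold j) (Znew j - Zold j) ≤ fB e ϱ C β (R 0) := by
    intro n
    induction n with
    | zero => intro _; simp
    | succ n ih =>
      intro hn
      have hn' : n ≤ m := Nat.le_of_succ_le hn
      have hnm : n < m := hn
      set i : Fin m := ⟨n, hnm⟩ with hi
      have step := hmin i (Zold i) (hold i)
      have hival : (i : ℕ) = n := rfl
      have hA : (fun j => if j < i then Znew j else if j = i then Znew i else Zold j)
          = R (n+1) := by
        funext j
        by_cases h1 : (j : ℕ) < n
        · have hlt : j < i := by rw [Fin.lt_def, hival]; exact h1
          simp [hR, hlt, Nat.lt_succ_of_lt h1]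
        · by_cases h2 : (j : ℕ) = n
          · have hj : j = i := by ext; rw [hival]; exact h2
            subst hj
            simp [hR, hival, Nat.lt_succ_self]
          · have h3 : ¬ j < i := by rw [Fin.lt_def, hival]; exact h1
            have h4 : j ≠ i := fun hh => h2 (by rw [hh, hival])
            simp [hR, h3, h4, show ¬ (j : ℕ) < n + 1 by omega]
      have hB : (fun j => if j < i then Znew j else if j = i then Zold i else Zold j)
          = R n := by
        funext j
        by_cases h1 : (j : ℕ) < n
        · have hlt : j < i := by rw [Fin.lt_def, hival]; exact h1
          simp [hR, hlt, h1]
        · by_cases h2 : (j : ℕ) = n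
          · have hj : j = i := by ext; rw [hival]; exact h2
            subst hj
            simp [hR, hival]
          · have h3 : ¬ j < i := by rw [Fin.lt_def, hival]; exact h1
            have h4 : j ≠ i := fun hh => h2 (by rw [hh, hival])
            simp [hR, h3, h4, h1]
      unfold blockObj at step
      rw [hA, hB] at step
      rw [show Zold i - Zold i = 0 by abel, mip_zero] at step
      have hfilter : Finset.univ.filter (fun j : Fin m => (j : ℕ) < n + 1)
          = insert i (Finset.univ.filter (fun j : Fin m => (j : ℕ) < n)) := by
        ext j
        simp only [Finset.mem_filter, Finset.mem_insert, Finset.mem_univ, true_and,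
          Fin.ext_iff, hi]
        omega
      have hni : i ∉ Finset.univ.filter (fun j : Fin m => (j : ℕ) < n) := by
        simp [hi]
      rw [hfilter, Finset.sum_insert hni]
      have := ih hn'
      linarith [mip_self_nonneg (Znew i - Zold i)]
  have h0 : R 0 = Zold := by funext j; simp [hR]
  have hm : R m = Znew := by funext j; simp [hR, j.isLt]
  have hfin : Finset.univ.filter (fun j : Fin m => (j : ℕ) < m) = Finset.univ := by
    ext j; simp [j.isLt]
  have := claim m le_rfl
  rw [h0, hm, hfin] at this
  exact this

lemma isClosed_Sset : IsClosed (Sset e ϱ) := by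
  have h1 : IsClosed {W : Matrix (Fin K) (Fin K) ℝ | W.mulVec e = (fun _ => 1)} :=
    isClosed_eq (continuous_id.matrix_mulVec continuous_const) continuous_const
  have h2 : IsClosed {W : Matrix (Fin K) (Fin K) ℝ |
      Wᵀ.mulVec (fun j => e j * ϱ j) = ϱ} :=
    isClosed_eq ((continuous_id.matrix_transpose).matrix_mulVec continuous_const)
      continuous_const
  have h3 : IsClosed {W : Matrix (Fin K) (Fin K) ℝ | W.trace = 0} :=
    isClosed_eq (continuous_id.matrix_trace) continuous_const
  have h4 : IsClosed {W : Matrix (Fin K) (Fin K) ℝ | ∀ a b, 0 ≤ W a b} := by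
    have : {W : Matrix (Fin K) (Fin K) ℝ | ∀ a b, 0 ≤ W a b}
        = ⋂ a, ⋂ b, {W : Matrix (Fin K) (Fin K) ℝ | 0 ≤ W a b} := by
      ext W; simp
    rw [this]
    exact isClosed_iInter fun a => isClosed_iInter fun b =>
      isClosed_le continuous_const ((continuous_apply b).comp (continuous_apply a))
  exact h1.inter (h2.inter (h3.inter h4))

lemma cont_mip2 {X : Type*} [TopologicalSpace X] {A B : X → Matrix (Fin K) (Fin K) ℝ}
    (hA : Continuous A) (hB : Continuous B) : Continuous fun x => mip (A x) (B x) :=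
  (hA.matrix_transpose.matrix_mul hB).matrix_trace

set_option maxHeartbeats 1000000 in
lemma continuous_fB : Continuous (fB e ϱ C β : (Fin m → Matrix (Fin K) (Fin K) ℝ) → ℝ) := by
  unfold fB fE
  refine Continuous.add (Continuous.add ?_ ?_) (continuous_const.mul ?_)
  · exact continuous_finset_sum _ fun i _ =>
      cont_mip2 (continuous_apply i) continuous_const
  · exact continuous_finset_sum _ fun i _ => continuous_finset_sum _ fun j _ =>
      cont_mip2 (continuous_apply i)
        ((((continuous_const.matrix_mul (continuous_apply j)).matrix_mul
          continuous_const).matrix_mul continuous_const).matrix_mul continuous_const)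
  · exact continuous_finset_sum _ fun i _ => continuous_finset_sum _ fun j _ =>
      cont_mip2 (continuous_apply i) (continuous_apply j)

set_option maxHeartbeats 1000000 in
lemma continuous_Gmix (i : Fin m) :
    Continuous (fun p : (Fin m → Matrix (Fin K) (Fin K) ℝ) × (Fin m → Matrix (Fin K) (Fin K) ℝ)
      => Gmix e ϱ C β p.1 p.2 i) := by
  unfold Gmix
  refine Continuous.add (Continuous.add (Continuous.add continuous_const ?_) ?_) ?_
  · exact continuous_finset_sum _ fun j _ =>
      (((continuous_const.matrix_mul
        ((continuous_apply j).comp continuous_snd)).matrix_mul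
          continuous_const).matrix_mul continuous_const).matrix_mul continuous_const
  · exact continuous_finset_sum _ fun j _ =>
      (((continuous_const.matrix_mul
        ((continuous_apply j).comp continuous_fst)).matrix_mul
          continuous_const).matrix_mul continuous_const).matrix_mul continuous_const
  · exact ((continuous_finset_sum _ fun j _ => (continuous_apply j).comp continuous_snd).add
      (continuous_finset_sum _ fun j _ => (continuous_apply j).comp continuous_fst)).const_smul β

lemma tendsto_mip2 {A B : Matrix (Fin K) (Fin K) ℝ} {f g : ℕ → Matrix (Fin K) (Fin K) ℝ}
    (hf : Tendsto f atTop (nhds A)) (hg : Tendsto g atTop (nhds B)) :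
    Tendsto (fun l => mip (f l) (g l)) atTop (nhds (mip A B)) := by
  have := (continuous_mip.tendsto (A, B)).comp (hf.prodMk_nhds hg)
  exact this

lemma Gmix_eq_gradB (Z : Fin m → Matrix (Fin K) (Fin K) ℝ) (i : Fin m) :
    Gmix e ϱ C β Z Z i = gradB e ϱ C β Z i := by
  unfold Gmix gradB
  rw [sum_erase_split m i Z]

end main

/-- Every limit point of the exact PBCD sequence started in `S^{N−1}` lies in `S^{N−1}` and is a
KKT point of the penalized problem `(P_β)`. -/
theorem pbcd_limit_points_are_KKT
    (K N : ℕ) (hK : 1 ≤ K) (hN : 3 ≤ N)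
    (e ϱ : Fin K → ℝ) (he : ∀ a, 0 < e a) (hϱ : ∀ a, 0 ≤ ϱ a)
    (C : Matrix (Fin K) (Fin K) ℝ) (hCsym : Cᵀ = C)
    (hC0 : ∀ a b, 0 ≤ C a b) (hCd : ∀ a, C a a = 0)
    (hS : (Sset e ϱ).Nonempty)
    (β σ : ℝ) (hβ : 0 < β) (hσ : 0 < σ)
    (Zseq : ℕ → Fin (N - 1) → Matrix (Fin K) (Fin K) ℝ)
    (hZ0 : ∀ i, Zseq 0 i ∈ Sset e ϱ)
    (hPBCD : IsPBCD e ϱ C β σ Zseq) :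
    ∀ (Zstar : Fin (N - 1) → Matrix (Fin K) (Fin K) ℝ) (φ : ℕ → ℕ),
      StrictMono φ → Tendsto (fun k => Zseq (φ k)) atTop (nhds Zstar) →
      (∀ i, Zstar i ∈ Sset e ϱ) ∧ IsKKT e ϱ C β Zstar := by
  intro Zstar φ hφ hconv
  classical
  have hmem : ∀ k i, Zseq k i ∈ Sset e ϱ := by
    intro k i
    cases k with
    | zero => exact hZ0 i
    | succ k => exact (hPBCD k i).1
  have hcomp : ∀ i, Tendsto (fun l => Zseq (φ l) i) atTop (nhds (Zstar i)) :=
    fun i => tendsto_pi_nhds.mp hconv i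
  have hstarS : ∀ i, Zstar i ∈ Sset e ϱ := fun i =>
    (isClosed_Sset e ϱ).mem_of_tendsto (hcomp i)
      (Filter.Eventually.of_forall fun l => hmem (φ l) i)
  have hdec : ∀ k, fB e ϱ C β (Zseq (k+1))
      + σ/2 * ∑ j, mip (Zseq (k+1) j - Zseq k j) (Zseq (k+1) j - Zseq k j)
        ≤ fB e ϱ C β (Zseq k) := fun k =>
    suff_decrease e ϱ C β (Zseq k) (Zseq (k+1)) (fun i => hmem k i)
      (fun i => (hPBCD k i).2)
  have hsumnn : ∀ k, 0 ≤ ∑ j, mip (Zseq (k+1) j - Zseq k j) (Zseq (k+1) j - Zseq k j) :=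
    fun k => Finset.sum_nonneg fun j _ => mip_self_nonneg _
  have hmono : ∀ k, fB e ϱ C β (Zseq (k+1)) ≤ fB e ϱ C β (Zseq k) := by
    intro k
    have h1 := hdec k
    have h2 := hsumnn k
    nlinarith
  have hanti : Antitone fun k => fB e ϱ C β (Zseq k) := antitone_nat_of_succ_le hmono
  have hfconv : Tendsto (fun l => fB e ϱ C β (Zseq (φ l))) atTop
      (nhds (fB e ϱ C β Zstar)) :=
    ((continuous_fB e ϱ C β).tendsto Zstar).comp hconv
  have hfull : Tendsto (fun k => fB e ϱ C β (Zseq k)) atTop (nhds (fB e ϱ C β Zstar)) := by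
    rcases tendsto_of_antitone hanti with h | ⟨L, hL⟩
    · exact absurd (h.comp hφ.tendsto_atTop) (not_tendsto_atBot_of_tendsto_nhds hfconv)
    · have hLe : L = fB e ϱ C β Zstar :=
        tendsto_nhds_unique (hL.comp hφ.tendsto_atTop) hfconv
      rwa [hLe] at hL
  have hdiff0 : Tendsto (fun k => fB e ϱ C β (Zseq k) - fB e ϱ C β (Zseq (k+1)))
      atTop (nhds 0) := by
    have h2 : Tendsto (fun k => fB e ϱ C β (Zseq (k+1))) atTop
        (nhds (fB e ϱ C β Zstar)) := hfull.comp (tendsto_add_atTop_nat 1)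
    simpa using hfull.sub h2
  have hd0 : ∀ i, Tendsto (fun k => Zseq (k+1) i - Zseq k i) atTop
      (nhds (0 : Matrix (Fin K) (Fin K) ℝ)) := by
    intro i
    have hsq : Tendsto
        (fun k => mip (Zseq (k+1) i - Zseq k i) (Zseq (k+1) i - Zseq k i)) atTop
        (nhds 0) := by
      have hgconv : Tendsto
          (fun k => 2/σ * (fB e ϱ C β (Zseq k) - fB e ϱ C β (Zseq (k+1)))) atTop
          (nhds 0) := by
        simpa using hdiff0.const_mul (2/σ)
      refine squeeze_zero (fun k => mip_self_nonneg _) (fun k => ?_) hgconv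
      have hsingle : mip (Zseq (k+1) i - Zseq k i) (Zseq (k+1) i - Zseq k i)
          ≤ ∑ j, mip (Zseq (k+1) j - Zseq k j) (Zseq (k+1) j - Zseq k j) :=
        Finset.single_le_sum
          (f := fun j => mip (Zseq (k+1) j - Zseq k j) (Zseq (k+1) j - Zseq k j))
          (fun j _ => mip_self_nonneg _) (Finset.mem_univ i)
      have h1 := hdec k
      have hσ' : 0 < σ := hσ
      rw [div_mul_eq_mul_div, le_div_iff₀ hσ']
      nlinarith
    apply tendsto_pi_nhds.mpr
    intro a
    apply tendsto_pi_nhds.mpr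
    intro b
    have habs : Tendsto (fun k => |(Zseq (k+1) i - Zseq k i) a b|) atTop (nhds 0) := by
      have hsqrt : Tendsto (fun k => Real.sqrt
          (mip (Zseq (k+1) i - Zseq k i) (Zseq (k+1) i - Zseq k i))) atTop (nhds 0) := by
        have := (Real.continuous_sqrt.tendsto 0).comp hsq
        simpa [Function.comp_def] using this
      refine squeeze_zero (fun k => abs_nonneg _) (fun k => ?_) hsqrt
      rw [← Real.sqrt_sq_eq_abs, sq]
      exact Real.sqrt_le_sqrt (sq_le_mip_self _ a b)
    have h0 : Tendsto (fun k => (Zseq (k+1) i - Zseq k i) a b) atTop (nhds 0) := by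
      refine squeeze_zero_norm (fun k => ?_) habs
      simp [Real.norm_eq_abs]
    simpa using h0
  have hconv1 : Tendsto (fun l => Zseq (φ l + 1)) atTop (nhds Zstar) := by
    rw [tendsto_pi_nhds]
    intro i
    have heq : (fun l => Zseq (φ l + 1) i)
        = fun l => Zseq (φ l) i + (Zseq (φ l + 1) i - Zseq (φ l) i) := by
      funext l
      abel
    rw [heq]
    have h2 : Tendsto (fun l => Zseq (φ l + 1) i - Zseq (φ l) i) atTop
        (nhds (0 : Matrix (Fin K) (Fin K) ℝ)) := (hd0 i).comp hφ.tendsto_atTop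
    simpa using (hcomp i).add h2
  refine ⟨hstarS, hstarS, ?_⟩
  intro i X hX
  have hVI : ∀ l, 0 ≤ mip (Gmix e ϱ C β (Zseq (φ l)) (Zseq (φ l + 1)) i
      + σ • (Zseq (φ l + 1) i - Zseq (φ l) i)) (X - Zseq (φ l + 1) i) := fun l =>
    vi_of_min e ϱ C β hσ hCsym (Zseq (φ l)) (Zseq (φ l + 1)) i ((hPBCD (φ l) i).1)
      (fun X' hX' => (hPBCD (φ l) i).2 X' hX') hX
  have hGm : Tendsto (fun l => Gmix e ϱ C β (Zseq (φ l)) (Zseq (φ l + 1)) i) atTop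
      (nhds (Gmix e ϱ C β Zstar Zstar i)) := by
    have := ((continuous_Gmix e ϱ C β i).tendsto (Zstar, Zstar)).comp
      (hconv.prodMk_nhds hconv1)
    exact this
  have hsm : Tendsto (fun l => σ • (Zseq (φ l + 1) i - Zseq (φ l) i)) atTop
      (nhds (0 : Matrix (Fin K) (Fin K) ℝ)) := by
    have h2 : Tendsto (fun l => Zseq (φ l + 1) i - Zseq (φ l) i) atTop
        (nhds (0 : Matrix (Fin K) (Fin K) ℝ)) := (hd0 i).comp hφ.tendsto_atTop
    simpa using h2.const_smul σ
  have hglim : Tendsto (fun l => Gmix e ϱ C β (Zseq (φ l)) (Zseq (φ l + 1)) i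
      + σ • (Zseq (φ l + 1) i - Zseq (φ l) i)) atTop
      (nhds (gradB e ϱ C β Zstar i)) := by
    have := hGm.add hsm
    rw [add_zero, Gmix_eq_gradB] at this
    exact this
  have hXlim : Tendsto (fun l => X - Zseq (φ l + 1) i) atTop (nhds (X - Zstar i)) :=
    tendsto_const_nhds.sub (tendsto_pi_nhds.mp hconv1 i)
  have hmiplim : Tendsto (fun l => mip (Gmix e ϱ C β (Zseq (φ l)) (Zseq (φ l + 1)) i
      + σ • (Zseq (φ l + 1) i - Zseq (φ l) i)) (X - Zseq (φ l + 1) i)) atTop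
      (nhds (mip (gradB e ϱ C β Zstar i) (X - Zstar i))) :=
    tendsto_mip2 hglim hXlim
  exact ge_of_tendsto hmiplim (Filter.Eventually.of_forall hVI)
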